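/- In the setting of the previous statement, define distances z_1 = d⃗(x_0, y_0), and for j ≥ 1, w_j = d⃗(x_{j-1} − r, x_j) and z_{j+1} = d⃗(y_{j-1} − r, y_j). Then for every i ≥ 0, x_0 ∈ f_r^i(X) if and only if Σ_{j=1}^i w_j ≤ Σ_{j=1}^i z_j. -/

import Mathlib

noncomputable section

instance : Fact ((0:ℝ) < 1) := ⟨zero_lt_one⟩

/-- Clockwise distance on the circle `S¹ = ℝ/ℤ`: the representative of `y - x` in `[0,1)`. -/
noncomputable def cdist (x y : AddCircle (1:ℝ)) : ℝ :=
  ((AddCircle.equivIco 1 0) (y - x)).1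

/-- `f` is the cyclic dynamical system map `f_r` on the finite set `X`. -/
def IsCyclicMap (X : Finset (AddCircle (1:ℝ))) (r : ℝ)
    (f : AddCircle (1:ℝ) → AddCircle (1:ℝ)) : Prop :=
  ∀ x ∈ X, f x ∈ X ∧ cdist x (f x) < r ∧
    ∀ y ∈ X, cdist x y < r → cdist x y ≤ cdist x (f x)

/-- `b` is the nearest point of `X` clockwise strictly after `a`. -/
def NearestCWAfter (X : Finset (AddCircle (1:ℝ))) (a b : AddCircle (1:ℝ)) : Prop :=
  b ∈ X ∧ 0 < cdist a b ∧ ∀ z ∈ X, 0 < cdist a z → cdist a b ≤ cdist a z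


/-!
By induction on `i`, the points `z ∈ X` with `f^[i] z = x₀` are exactly those of the clockwise
arc `[x i, y i)`, whose length is `D i = (z₁ + ⋯ + z_{i+1}) - (w₁ + ⋯ + w_i) ∈ [0, 1]`.
Indeed, `f z` is the farthest point of `X` in `[z, z + r)`, so `f z` lands in an arc `[u, v)`
with `v ∈ X` iff `z ∈ (u - r, v - r]`; on `X` this is the arc from the first point `u'` after
`u - r` to the first point `v'` after `v - r`. Its length is `D - d⃗(u - r, u') + d⃗(v - r, v')`,
and when `d⃗(u - r, u') > D` the points `u'` and `v'` coincide and this length is exactly `0`.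
Hence `x₀ ∈ f^i(X)` iff `D i > 0`, which for `i ≥ 1` means `w_i ≤ D (i - 1)`, that is
`w₁ + ⋯ + w_i ≤ z₁ + ⋯ + z_i`.
-/

local notation "S1" => AddCircle (1:ℝ)

lemma cdist_nonneg (x y : S1) : 0 ≤ cdist x y :=
  ((AddCircle.equivIco 1 0) (y - x)).2.1

lemma cdist_lt_one (x y : S1) : cdist x y < 1 := by
  simpa [cdist] using ((AddCircle.equivIco 1 0) (y - x)).2.2

lemma add_cdist (x y : S1) : x + (cdist x y : S1) = y := by
  have h : ((cdist x y : ℝ) : S1) = y - x := (AddCircle.equivIco 1 0).symm_apply_apply (y - x)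
  rw [h, add_sub_cancel]

lemma cdist_eq_of_add_eq {x y : S1} {t : ℝ} (h : x + t = y) (h0 : 0 ≤ t) (h1 : t < 1) :
    cdist x y = t := by
  have ht : t ∈ Set.Ico (0:ℝ) (0 + 1) := ⟨h0, by simpa using h1⟩
  have : (AddCircle.equivIco 1 0) (y - x) = ⟨t, ht⟩ := by
    rw [← h, add_sub_cancel_left]
    exact (AddCircle.equivIco 1 0).apply_symm_apply ⟨t, ht⟩
  exact congrArg Subtype.val this

lemma cdist_self (x : S1) : cdist x x = 0 :=
  cdist_eq_of_add_eq (by simp) le_rfl one_pos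

lemma cdist_eq_zero {x y : S1} : cdist x y = 0 ↔ x = y := by
  refine ⟨fun h => ?_, fun h => h ▸ cdist_self x⟩
  rw [← add_cdist x y, h, AddCircle.coe_zero, add_zero]

lemma cdist_pos {x y : S1} : 0 < cdist x y ↔ x ≠ y := by
  rw [(cdist_nonneg x y).lt_iff_ne', Ne, cdist_eq_zero]

namespace NearestCWAfter

variable {X : Finset S1} {a b b' u' v' z : S1} {D : ℝ}

lemma unique (h : NearestCWAfter X a b) (h' : NearestCWAfter X a b') : b = b' := by
  rw [← add_cdist a b, ← add_cdist a b', le_antisymm (h.2.2 b' h'.1 h'.2.1) (h'.2.2 b h.1 h.2.1)]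

/-! For the rest of this section `u'` is the first point of `X` after `a`, and `v'` the first
one after `a + D`. -/

lemma cdist_eq_add_cdist_of_lt (hu' : NearestCWAfter X a u')
    (hv' : NearestCWAfter X (a + D) v') (hD : 0 ≤ D) (hw : D < cdist a u') :
    cdist a u' = D + cdist (a + D) v' := by
  set w := cdist a u'
  set z' := cdist (a + D) v'
  have hu'a : a + (w : S1) = u' := add_cdist a u'
  have hv'b : a + D + (z' : S1) = v' := add_cdist (a + D) v'
  have hw1 : w < 1 := cdist_lt_one a u'
  have hbu' : cdist (a + D) u' = w - D := cdist_eq_of_add_eq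
    (by rw [← hu'a]; simp only [AddCircle.coe_sub]; abel) (by linarith) (by linarith)
  have hz'w : z' ≤ w - D := hbu' ▸ hv'.2.2 u' hu'.1 (by linarith)
  have hav' : cdist a v' = D + z' := cdist_eq_of_add_eq
    (by rw [← hv'b]; simp only [AddCircle.coe_add]; abel) (by linarith [hv'.2.1]) (by linarith)
  have hwz' : w ≤ D + z' := hav' ▸ hu'.2.2 v' hv'.1 (by linarith [hv'.2.1])
  linarith

lemma sub_add_cdist_pos_iff (hu' : NearestCWAfter X a u')
    (hv' : NearestCWAfter X (a + D) v') (hD : 0 ≤ D) :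
    0 < D - cdist a u' + cdist (a + D) v' ↔ cdist a u' ≤ D := by
  refine ⟨fun h => ?_, fun h => by linarith [hv'.2.1]⟩
  by_contra! hw
  linarith [hu'.cdist_eq_add_cdist_of_lt hv' hD hw]

lemma sub_add_cdist_le_one (hu' : NearestCWAfter X a u')
    (hv' : NearestCWAfter X (a + D) v') (hD0 : 0 ≤ D) (hD1 : D ≤ 1) :
    D - cdist a u' + cdist (a + D) v' ≤ 1 := by
  set w := cdist a u'
  have hu'a : a + (w : S1) = u' := add_cdist a u'
  rcases lt_trichotomy w D with hw | hw | hw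
  · -- `u'` lies after `a + D`, so it bounds the gap from `a + D` to `v'`
    have hbu' : cdist (a + D) u' = w - D + 1 := cdist_eq_of_add_eq
      (by rw [← hu'a]; simp only [AddCircle.coe_add, AddCircle.coe_sub, AddCircle.coe_period]; abel)
      (by linarith [hu'.2.1]) (by linarith)
    linarith [hbu' ▸ hv'.2.2 u' hu'.1 (by linarith [hu'.2.1])]
  · linarith [cdist_lt_one (a + D) v']
  · linarith [hu'.cdist_eq_add_cdist_of_lt hv' hD0 hw]

/-- On `X`, the arc `(a, a + D]` is the arc `[u', v')`. -/
lemma pos_and_cdist_le_iff (hu' : NearestCWAfter X a u')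
    (hv' : NearestCWAfter X (a + D) v') (hD1 : D < 1) (hw : cdist a u' ≤ D) (hz : z ∈ X) :
    0 < cdist a z ∧ cdist a z ≤ D ↔ cdist u' z < D - cdist a u' + cdist (a + D) v' := by
  set w := cdist a u'
  set σ := cdist a z
  set c := cdist u' z
  have hu'a : a + (w : S1) = u' := add_cdist a u'
  have hu'z : u' + (c : S1) = z := add_cdist u' z
  have hc1 : c < 1 := cdist_lt_one u' z
  have hσ1 : σ < 1 := cdist_lt_one a z
  constructor
  · rintro ⟨hσ0, hσD⟩
    have hwσ : w ≤ σ := hu'.2.2 z hz hσ0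
    have hc : c = σ - w := cdist_eq_of_add_eq
      (by rw [← hu'a, ← add_cdist a z]; simp only [AddCircle.coe_sub]; abel)
      (by linarith) (by linarith [hu'.2.1])
    linarith [hv'.2.1]
  · intro hc
    have hcD : c ≤ D - w := by
      by_contra! hlt
      -- otherwise `z` would lie strictly between `a + D` and `v'`
      have hbz : cdist (a + D) z = w + c - D := cdist_eq_of_add_eq
        (by rw [← hu'z, ← hu'a]; simp only [AddCircle.coe_add, AddCircle.coe_sub]; abel)
        (by linarith) (by linarith)
      linarith [hbz ▸ hv'.2.2 z hz (by linarith)]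
    have hσ : σ = w + c := cdist_eq_of_add_eq
      (by rw [← hu'z, ← hu'a]; simp only [AddCircle.coe_add]; abel)
      (by linarith [cdist_nonneg u' z, hu'.2.1]) (by linarith)
    constructor <;> linarith [hu'.2.1, cdist_nonneg u' z]

end NearestCWAfter

namespace IsCyclicMap

variable {X : Finset S1} {r : ℝ} {f : S1 → S1} {u z : S1} {D : ℝ}

lemma cdist_apply_lt (hf : IsCyclicMap X r f) (hr1 : r ≤ 1) (hu : u ∈ X) (hz : z ∈ X)
    (hσ : 0 < cdist (u - r) z) : cdist u (f z) < cdist (u - r) z := by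
  set σ := cdist (u - r) z
  have hza : u - r + (σ : S1) = z := add_cdist _ _
  obtain ⟨-, hφr, hmax⟩ := hf z hz
  set φ := cdist z (f z)
  have hzf : z + (φ : S1) = f z := add_cdist _ _
  -- if `u` is within reach of `z`, it is a candidate for `f z`
  have hreach : r - σ ≤ φ := by
    rcases le_or_gt σ r with h | h
    · have hzu : cdist z u = r - σ := cdist_eq_of_add_eq
        (by rw [← hza]; simp only [AddCircle.coe_sub]; abel) (by linarith) (by linarith)
      exact hzu ▸ hmax u hu (by linarith)
    · linarith [cdist_nonneg z (f z)]
  have hufz : cdist u (f z) = σ + φ - r := cdist_eq_of_add_eq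
    (by rw [← hzf, ← hza]; simp only [AddCircle.coe_add, AddCircle.coe_sub]; abel)
    (by linarith) (by linarith [cdist_lt_one (u - r) z])
  linarith

lemma le_cdist_apply (hf : IsCyclicMap X r f) (hr1 : r ≤ 1) (hv : u + D ∈ X) (hD : 0 ≤ D)
    (hz : z ∈ X) {s : ℝ} (hzs : u - r + (s : S1) = z) (hDs : D < s) (hs1 : s ≤ 1) :
    D ≤ cdist u (f z) := by
  obtain ⟨-, hφr, hmax⟩ := hf z hz
  set φ := cdist z (f z)
  have hzf : z + (φ : S1) = f z := add_cdist _ _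
  -- if `u + D` is within reach of `z`, it is a candidate for `f z`
  have hreach : D + r - s ≤ φ := by
    rcases le_or_gt (D + r) s with h | h
    · linarith [cdist_nonneg z (f z)]
    · have hzv : cdist z (u + D) = D + r - s := cdist_eq_of_add_eq
        (by rw [← hzs]; simp only [AddCircle.coe_add, AddCircle.coe_sub]; abel)
        (by linarith) (by linarith)
      exact hzv ▸ hmax _ hv (by linarith)
  have hufz : cdist u (f z) = s + φ - r := cdist_eq_of_add_eq
    (by rw [← hzf, ← hzs]; simp only [AddCircle.coe_add, AddCircle.coe_sub]; abel)
    (by linarith) (by linarith)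
  linarith

lemma cdist_apply_lt_iff (hf : IsCyclicMap X r f) (hr1 : r ≤ 1) (hu : u ∈ X) (hv : u + D ∈ X)
    (hD0 : 0 ≤ D) (hD1 : D < 1) (hz : z ∈ X) :
    cdist u (f z) < D ↔ 0 < cdist (u - r) z ∧ cdist (u - r) z ≤ D := by
  refine ⟨fun h => ?_, fun ⟨h0, hD⟩ => (hf.cdist_apply_lt hr1 hu hz h0).trans_le hD⟩
  by_contra! hout
  refine h.not_ge ?_
  rcases (cdist_nonneg (u - r) z).eq_or_lt with h0 | h0
  · -- view `z = u - r` as the point at clockwise distance `1` after `u - r`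
    refine hf.le_cdist_apply hr1 hv hD0 hz (s := 1) ?_ hD1 le_rfl
    rw [AddCircle.coe_period, add_zero, cdist_eq_zero.1 h0.symm]
  · exact hf.le_cdist_apply hr1 hv hD0 hz (add_cdist _ _) (hout h0) (cdist_lt_one _ _).le

end IsCyclicMap

/-- The arc `[u, v)` of length `D = 1` is the whole circle although `u = v`; this does occur for
`g = f^[i]`, so the length is recorded separately from the endpoints. -/
structure IsPreimageArc (X : Finset S1) (g : S1 → S1) (x₀ u v : S1) (D : ℝ) : Prop where
  left_mem : u ∈ X
  right_mem : v ∈ X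
  nonneg : 0 ≤ D
  le_one : D ≤ 1
  add_eq : u + (D : S1) = v
  apply_eq_iff : ∀ z ∈ X, g z = x₀ ↔ cdist u z < D

namespace IsPreimageArc

variable {X : Finset S1} {r : ℝ} {f g : S1 → S1} {x₀ y u v u' v' : S1} {D : ℝ}

lemma of_nearestCWAfter (hx₀ : x₀ ∈ X) (hy : NearestCWAfter X x₀ y) :
    IsPreimageArc X id x₀ x₀ y (cdist x₀ y) where
  left_mem := hx₀
  right_mem := hy.1
  nonneg := cdist_nonneg x₀ y
  le_one := (cdist_lt_one x₀ y).le
  add_eq := add_cdist x₀ y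
  apply_eq_iff z hz := by
    refine ⟨fun h => ?_, fun h => ?_⟩
    · rw [show z = x₀ from h, cdist_self]
      exact hy.2.1
    · by_contra hne
      exact (hy.2.2 z hz (cdist_pos.2 (Ne.symm hne))).not_gt h

lemma exists_apply_eq_iff (h : IsPreimageArc X g x₀ u v D) :
    (∃ z ∈ X, g z = x₀) ↔ 0 < D :=
  ⟨fun ⟨z, hz, hgz⟩ => (cdist_nonneg u z).trans_lt ((h.apply_eq_iff z hz).1 hgz),
    fun hD => ⟨u, h.left_mem, (h.apply_eq_iff u h.left_mem).2 (by rwa [cdist_self])⟩⟩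

lemma sub_add_cdist_pos_iff (h : IsPreimageArc X g x₀ u v D)
    (hu' : NearestCWAfter X (u - r) u') (hv' : NearestCWAfter X (v - r) v') :
    0 < D - cdist (u - r) u' + cdist (v - r) v' ↔ cdist (u - r) u' ≤ D := by
  rw [← h.add_eq, add_sub_right_comm] at hv' ⊢
  exact hu'.sub_add_cdist_pos_iff hv' h.nonneg

lemma comp (h : IsPreimageArc X g x₀ u v D) (hf : IsCyclicMap X r f) (hr1 : r ≤ 1)
    (hu' : NearestCWAfter X (u - r) u') (hv' : NearestCWAfter X (v - r) v') :
    IsPreimageArc X (g ∘ f) x₀ u' v' (D - cdist (u - r) u' + cdist (v - r) v') := by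
  obtain ⟨hu, hv, hD0, hD1, rfl, hg⟩ := h
  rw [add_sub_right_comm] at hv' ⊢
  refine ⟨hu'.1, hv'.1, ?_, hu'.sub_add_cdist_le_one hv' hD0 hD1, ?_, fun z hz => ?_⟩
  · by_cases hw : cdist (u - r) u' ≤ D
    · exact ((hu'.sub_add_cdist_pos_iff hv' hD0).2 hw).le
    · linarith [hu'.cdist_eq_add_cdist_of_lt hv' hD0 (not_le.1 hw)]
  · calc u' + ((D - cdist (u - r) u' + cdist (u - r + D) v' : ℝ) : S1)
        = u - r + cdist (u - r) u' + ((D - cdist (u - r) u' + cdist (u - r + D) v' : ℝ) : S1) := by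
          rw [add_cdist]
      _ = u - r + D + (cdist (u - r + D) v' : S1) := by
          simp only [AddCircle.coe_add, AddCircle.coe_sub]; abel
      _ = v' := add_cdist _ _
  rw [Function.comp_apply, hg (f z) (hf z hz).1]
  rcases hD1.lt_or_eq with hD1 | rfl
  · rw [hf.cdist_apply_lt_iff hr1 hu hv hD0 hD1 hz]
    by_cases hw : cdist (u - r) u' ≤ D
    · exact hu'.pos_and_cdist_le_iff hv' hD1 hw hz
    · have hdead := hu'.cdist_eq_add_cdist_of_lt hv' hD0 (not_le.1 hw)
      constructor
      · rintro ⟨h0, hσD⟩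
        linarith [hu'.2.2 z hz h0]
      · intro hc
        linarith [cdist_nonneg u' z]
  · rw [AddCircle.coe_period, add_zero] at hv' ⊢
    obtain rfl := hu'.unique hv'
    exact iff_of_true (cdist_lt_one u (f z)) (by linarith [cdist_lt_one u' z])

end IsPreimageArc

theorem mem_image_iff_gap_sums_general
    (X : Finset (AddCircle (1:ℝ))) (r : ℝ) (hr1 : r ≤ 1)
    (f : AddCircle (1:ℝ) → AddCircle (1:ℝ)) (hf : IsCyclicMap X r f)
    (x₀ : AddCircle (1:ℝ)) (hx₀ : x₀ ∈ X)
    (x y : ℕ → AddCircle (1:ℝ))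
    (hx0 : x 0 = x₀)
    (hy0 : NearestCWAfter X x₀ (y 0))
    (hxj : ∀ j, NearestCWAfter X (x j - ((r : ℝ) : AddCircle (1:ℝ))) (x (j+1)))
    (hyj : ∀ j, NearestCWAfter X (y j - ((r : ℝ) : AddCircle (1:ℝ))) (y (j+1)))
    (zs ws : ℕ → ℝ)
    (hz1 : zs 1 = cdist x₀ (y 0))
    (hzs : ∀ j, zs (j + 2) = cdist (y j - ((r : ℝ) : AddCircle (1:ℝ))) (y (j+1)))
    (hws : ∀ j, ws (j + 1) = cdist (x j - ((r : ℝ) : AddCircle (1:ℝ))) (x (j+1)))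
    (i : ℕ) :
    (∃ z ∈ X, f^[i] z = x₀) ↔
      ∑ j ∈ Finset.Icc 1 i, ws j ≤ ∑ j ∈ Finset.Icc 1 i, zs j := by
  set W : ℕ → ℝ := fun k => ∑ j ∈ Finset.Icc 1 k, ws j
  set Z : ℕ → ℝ := fun k => ∑ j ∈ Finset.Icc 1 k, zs j
  have hW (k : ℕ) : W (k + 1) = W k + ws (k + 1) := Finset.sum_Icc_succ_top (by omega) _
  have hZ (k : ℕ) : Z (k + 1) = Z k + zs (k + 1) := Finset.sum_Icc_succ_top (by omega) _
  let D : ℕ → ℝ := fun k => Z k + zs (k + 1) - W k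
  have hD (k : ℕ) :
      D (k + 1) = D k - cdist (x k - r) (x (k + 1)) + cdist (y k - r) (y (k + 1)) := by
    simp only [D, hW, hZ, ← hws, ← hzs]
    ring
  have arc (k : ℕ) : IsPreimageArc X (f^[k]) x₀ (x k) (y k) (D k) := by
    induction k with
    | zero =>
      have hD0 : D 0 = cdist x₀ (y 0) := by simp [D, W, Z, hz1]
      rw [hD0, hx0]
      exact .of_nearestCWAfter hx₀ hy0
    | succ k ih =>
      rw [hD, Function.iterate_succ]
      exact ih.comp hf hr1 (hxj k) (hyj k)
  have pos_iff (k : ℕ) : 0 < D k ↔ W k ≤ Z k := by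
    cases k with
    | zero => simpa [D, W, Z, hz1] using hy0.2.1
    | succ k =>
      rw [hD, (arc k).sub_add_cdist_pos_iff (hxj k) (hyj k), ← hws, hW, hZ]
      constructor <;> intro <;> linarith
  exact (arc i).exists_apply_eq_iff.trans (pos_iff i)

/-- With the sequences `x j, y j` as before, set `z₁ = d⃗(x₀, y₀)`, and for `j ≥ 1`,
`w_j = d⃗(x_{j-1} − r, x_j)` and `z_{j+1} = d⃗(y_{j-1} − r, y_j)`. Then for every `i ≥ 0`,
`x₀ ∈ f_r^i(X)` if and only if `Σ_{j=1}^i w_j ≤ Σ_{j=1}^i z_j`. -/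
theorem mem_image_iff_gap_sums
    (X : Finset (AddCircle (1:ℝ))) (r : ℝ) (hr0 : 0 < r) (hr1 : r ≤ 1)
    (f : AddCircle (1:ℝ) → AddCircle (1:ℝ)) (hf : IsCyclicMap X r f)
    (x₀ : AddCircle (1:ℝ)) (hx₀ : x₀ ∈ X)
    (x y : ℕ → AddCircle (1:ℝ))
    (hx0 : x 0 = x₀)
    (hy0 : NearestCWAfter X x₀ (y 0))
    (hxj : ∀ j, NearestCWAfter X (x j - ((r : ℝ) : AddCircle (1:ℝ))) (x (j+1)))
    (hyj : ∀ j, NearestCWAfter X (y j - ((r : ℝ) : AddCircle (1:ℝ))) (y (j+1)))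
    (zs ws : ℕ → ℝ)
    (hz1 : zs 1 = cdist x₀ (y 0))
    (hzs : ∀ j, zs (j + 2) = cdist (y j - ((r : ℝ) : AddCircle (1:ℝ))) (y (j+1)))
    (hws : ∀ j, ws (j + 1) = cdist (x j - ((r : ℝ) : AddCircle (1:ℝ))) (x (j+1)))
    (i : ℕ) :
    (∃ z ∈ X, f^[i] z = x₀) ↔
      ∑ j ∈ Finset.Icc 1 i, ws j ≤ ∑ j ∈ Finset.Icc 1 i, zs j :=
  mem_image_iff_gap_sums_general X r hr1 f hf x₀ hx₀ x y hx0 hy0 hxj hyj zs ws hz1 hzs hws i
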